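/- arXiv:1911.10553 — 6 statements merged into one kernel-verified Lean document; each statement's English description precedes it below -/
import Mathlib

section
/- If a lies on the boundary of the copositive cone C_n, then there exists a nonzero nonnegative vector ξ ∈ ℝⁿ with ξᵀaξ = 0. -/
open Matrix

/-- A matrix is copositive if its quadratic form is nonnegative on the nonnegative orthant. -/
def Copositive {m : Type*} [Fintype m] (a : Matrix m m ℝ) : Prop :=
  ∀ u : m → ℝ, (∀ i, 0 ≤ u i) → 0 ≤ u ⬝ᵥ a *ᵥ u

/-- The submodule of symmetric n×n real matrices. -/
def Sn (n : ℕ) : Submodule ℝ (Matrix (Fin n) (Fin n) ℝ) where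
  carrier := {a | a.IsSymm}
  add_mem' := fun ha hb => ha.add hb
  zero_mem' := Matrix.isSymm_zero
  smul_mem' := fun c a ha => ha.smul c

/-- The copositive cone, as a subset of the symmetric matrices. -/
def Cn (n : ℕ) : Set (Sn n) := {a | Copositive a.1}

/-- The set A^t : symmetric matrices with (t,t) entry zero, all other entries positive. -/
def At (n : ℕ) (t : Fin n) : Set (Sn n) :=
  {a | a.1 t t = 0 ∧ ∀ i j, (i, j) ≠ (t, t) → 0 < a.1 i j}

/-- T_n : symmetric nonnegative matrices with zero diagonal. -/
def Tn (n : ℕ) : Set (Sn n) := {a | (∀ i j, 0 ≤ a.1 i j) ∧ ∀ i, a.1 i i = 0}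

/-- A monomial matrix: exactly one nonzero entry in each row and column. -/
def IsMonomial {n : ℕ} (m : Matrix (Fin n) (Fin n) ℝ) : Prop :=
  (∀ i, ∃! j, m i j ≠ 0) ∧ (∀ j, ∃! i, m i j ≠ 0)

/-!
A copositive matrix whose quadratic form has no nonzero zero on the nonnegative orthant is strictly
positive on the compact set of nonnegative unit vectors. By compactness this strict positivity
persists for all nearby matrices, and by homogeneity it makes them copositive; so such a matrix is
an interior point of the cone. A boundary point, which is copositive because the cone is closed,
must therefore have such a zero.
-/

section Copositive

variable {m : Type*} [Fintype m]

theorem continuous_quadForm :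
    Continuous fun p : Matrix m m ℝ × (m → ℝ) => p.2 ⬝ᵥ p.1 *ᵥ p.2 :=
  continuous_snd.dotProduct (continuous_fst.matrix_mulVec continuous_snd)

theorem isClosed_setOf_copositive : IsClosed {a : Matrix m m ℝ | Copositive a} := by
  simp only [Copositive, Set.ofPred_forall]
  exact isClosed_iInter fun u => isClosed_iInter fun _ =>
    isClosed_le continuous_const
      (continuous_const.dotProduct (continuous_id.matrix_mulVec continuous_const))

def nonnegUnitVectors (m : Type*) [Fintype m] : Set (m → ℝ) :=
  Metric.sphere 0 1 ∩ Set.Ici 0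

theorem isCompact_nonnegUnitVectors : IsCompact (nonnegUnitVectors m) :=
  (isCompact_sphere 0 1).inter_right isClosed_Ici

theorem copositive_of_nonneg_on_nonnegUnitVectors {a : Matrix m m ℝ}
    (h : ∀ u ∈ nonnegUnitVectors m, 0 ≤ u ⬝ᵥ a *ᵥ u) : Copositive a := by
  intro u hu
  rcases eq_or_ne u 0 with rfl | hu0
  · simp
  have hnorm : 0 < ‖u‖ := norm_pos_iff.mpr hu0
  have hunit : ‖u‖⁻¹ • u ∈ nonnegUnitVectors m :=
    ⟨by simp [norm_smul, hnorm.ne'], smul_nonneg (inv_nonneg.mpr hnorm.le) (Pi.le_def.mpr hu)⟩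
  have hscale : u ⬝ᵥ a *ᵥ u = ‖u‖ ^ 2 * ((‖u‖⁻¹ • u) ⬝ᵥ a *ᵥ (‖u‖⁻¹ • u)) := by
    simp only [smul_dotProduct, mulVec_smul, dotProduct_smul, smul_eq_mul]
    field_simp
  rw [hscale]
  exact mul_nonneg (sq_nonneg _) (h _ hunit)

theorem eventually_copositive_of_pos_on_nonnegUnitVectors {a : Matrix m m ℝ}
    (h : ∀ u ∈ nonnegUnitVectors m, 0 < u ⬝ᵥ a *ᵥ u) : ∀ᶠ b in nhds a, Copositive b := by
  have hnear : ∀ u ∈ nonnegUnitVectors m,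
      ∀ᶠ p : Matrix m m ℝ × (m → ℝ) in nhds (a, u), 0 < p.2 ⬝ᵥ p.1 *ᵥ p.2 := fun u hu =>
    (continuous_quadForm.tendsto (a, u)).eventually (lt_mem_nhds (h u hu))
  filter_upwards [isCompact_nonnegUnitVectors.eventually_forall_of_forall_eventually
    (P := fun b u => 0 < u ⬝ᵥ b *ᵥ u) hnear] with b hb
  exact copositive_of_nonneg_on_nonnegUnitVectors fun u hu => (hb u hu).le

end Copositive

theorem isClosed_Cn (n : ℕ) : IsClosed (Cn n) :=
  isClosed_setOf_copositive.preimage continuous_subtype_val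

/-- A boundary point of C_n has a nonzero nonnegative zero of its quadratic form. -/
theorem stmt_3 (n : ℕ) (a : Sn n) (ha : a ∈ frontier (Cn n)) :
    ∃ ξ : Fin n → ℝ, ξ ≠ 0 ∧ (∀ i, 0 ≤ ξ i) ∧ ξ ⬝ᵥ a.1 *ᵥ ξ = 0 := by
  have haC : Copositive a.1 := (isClosed_Cn n).frontier_subset ha
  by_contra! hzero
  have hpos : ∀ u ∈ nonnegUnitVectors (Fin n), 0 < u ⬝ᵥ a.1 *ᵥ u := fun u ⟨hsphere, hnonneg⟩ =>
    (haC u hnonneg).lt_of_ne' <|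
      hzero u (Metric.ne_of_mem_sphere hsphere one_ne_zero) hnonneg
  have hint : a ∈ interior (Cn n) := mem_interior_iff_mem_nhds.mpr <|
    (continuous_subtype_val.tendsto a).eventually
      (eventually_copositive_of_pos_on_nonnegUnitVectors hpos)
  exact ha.2 hint
end

section
/- If a is copositive and ξ ∈ ℝⁿ has all coordinates strictly positive with ξᵀaξ = 0, then aξ = 0. -/
open Matrix

private lemma quad_zero_aux (b c δ : ℝ) (hδ : 0 < δ)
    (h : ∀ t : ℝ, |t| ≤ δ → 0 ≤ 2 * t * b + t ^ 2 * c) : b = 0 := by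
  by_contra hb
  rcases lt_or_gt_of_ne hb with hb | hb
  · have hc1 : 0 < |c| + 1 := by positivity
    set ε := min δ (-b / (|c| + 1)) with hε
    have hεpos : 0 < ε := lt_min hδ (div_pos (neg_pos.mpr hb) hc1)
    have hεδ : |ε| ≤ δ := by rw [abs_of_pos hεpos]; exact min_le_left _ _
    have hεb : ε * (|c| + 1) ≤ -b := by
      rw [← le_div_iff₀ hc1]; exact min_le_right _ _
    have hcc : c ≤ |c| := le_abs_self c
    have := h ε hεδ
    nlinarith [mul_pos hεpos hεpos, mul_pos hεpos (neg_pos.mpr hb)]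
  · have hc1 : 0 < |c| + 1 := by positivity
    set ε := min δ (b / (|c| + 1)) with hε
    have hεpos : 0 < ε := lt_min hδ (div_pos hb hc1)
    have hεδ : |(-ε)| ≤ δ := by rw [abs_neg, abs_of_pos hεpos]; exact min_le_left _ _
    have hεb : ε * (|c| + 1) ≤ b := by
      rw [← le_div_iff₀ hc1]; exact min_le_right _ _
    have hcc : c ≤ |c| := le_abs_self c
    have := h (-ε) hεδ
    nlinarith [mul_pos hεpos hεpos, mul_pos hεpos hb]

/-- If a is copositive and ξ > 0 entrywise with ξᵀaξ = 0, then aξ = 0. -/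
theorem stmt_4 (n : ℕ) (a : Matrix (Fin n) (Fin n) ℝ) (hs : a.IsSymm) (hc : Copositive a)
    (ξ : Fin n → ℝ) (hξ : ∀ i, 0 < ξ i) (h0 : ξ ⬝ᵥ a *ᵥ ξ = 0) :
    a *ᵥ ξ = 0 := by
  funext i
  have hexp : ∀ t : ℝ,
      (ξ + t • (Pi.single i 1 : Fin n → ℝ)) ⬝ᵥ a *ᵥ (ξ + t • (Pi.single i 1 : Fin n → ℝ))
        = ξ ⬝ᵥ a *ᵥ ξ + 2 * t * (a *ᵥ ξ) i + t ^ 2 * a i i := by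
    intro t
    have h1 : ξ ⬝ᵥ a *ᵥ (Pi.single i 1 : Fin n → ℝ) = (a *ᵥ ξ) i := by
      rw [Matrix.dotProduct_mulVec, dotProduct_single, ← vecMul_transpose, hs]
      ring
    simp only [mulVec_add, mulVec_smul, dotProduct_add, add_dotProduct, dotProduct_smul,
      smul_dotProduct, h1, single_dotProduct, smul_eq_mul]
    simp [mulVec_single]
    ring
  have key : ∀ t : ℝ, |t| ≤ ξ i → 0 ≤ 2 * t * (a *ᵥ ξ) i + t ^ 2 * a i i := by
    intro t ht
    have hnn : ∀ j, 0 ≤ (ξ + t • (Pi.single i 1 : Fin n → ℝ)) j := by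
      intro j
      by_cases hji : j = i
      · subst hji
        simp only [Pi.add_apply, Pi.smul_apply, Pi.single_eq_same, smul_eq_mul, mul_one]
        have := abs_le.mp ht
        linarith
      · simp only [Pi.add_apply, Pi.smul_apply, Pi.single_eq_of_ne hji, smul_eq_mul, mul_zero,
          add_zero]
        exact (hξ j).le
    have := hc _ hnn
    rw [hexp t, h0] at this
    linarith
  have := quad_zero_aux ((a *ᵥ ξ) i) (a i i) (ξ i) (hξ i) key
  simpa using this
end

section
/- Let φ : S_n → S_n be linear with φ(C_n) = C_n and fix an index t. For any two matrices b, c ∈ φ(A^t), the zero sets of their quadratic forms on the nonnegative orthant coincide: {x ≥ 0 : xᵀbx = 0} = {x ≥ 0 : xᵀcx = 0}. -/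
open Matrix

lemma copos_of_nonneg {n : ℕ} {m : Matrix (Fin n) (Fin n) ℝ} (h : ∀ i j, 0 ≤ m i j) :
    Copositive m := by
  intro u hu
  simp only [Matrix.mulVec, dotProduct]
  refine Finset.sum_nonneg fun i _ => mul_nonneg (hu i) ?_
  exact Finset.sum_nonneg fun j _ => mul_nonneg (h i j) (hu j)

lemma At_nonneg {n : ℕ} {t : Fin n} {a : Sn n} (ha : a ∈ At n t) : ∀ i j, 0 ≤ a.1 i j := by
  intro i j
  by_cases hij : (i, j) = (t, t)
  · simp only [Prod.mk.injEq] at hij; rw [hij.1, hij.2]; exact le_of_eq ha.1.symm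
  · exact (ha.2 i j hij).le

lemma At_dominates {n : ℕ} {t : Fin n} {a a' : Sn n} (ha : a ∈ At n t) (ha' : a' ∈ At n t) :
    ∃ l : ℝ, ∀ i j, 0 ≤ (l • a - a').1 i j := by
  refine ⟨∑ p : Fin n × Fin n, a'.1 p.1 p.2 / a.1 p.1 p.2, fun i j => ?_⟩
  have hterm : ∀ p : Fin n × Fin n, 0 ≤ a'.1 p.1 p.2 / a.1 p.1 p.2 := fun p =>
    div_nonneg (At_nonneg ha' _ _) (At_nonneg ha _ _)
  have hle : a'.1 i j / a.1 i j ≤ ∑ p : Fin n × Fin n, a'.1 p.1 p.2 / a.1 p.1 p.2 :=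
    Finset.single_le_sum (fun p _ => hterm p) (Finset.mem_univ (i, j))
  simp only [Submodule.coe_sub, Submodule.coe_smul, Matrix.sub_apply, Matrix.smul_apply,
    smul_eq_mul, sub_nonneg]
  by_cases hij : (i, j) = (t, t)
  · simp only [Prod.mk.injEq] at hij; rw [hij.1, hij.2, ha.1, ha'.1, mul_zero]
  · have hpos := ha.2 i j hij
    calc a'.1 i j = a'.1 i j / a.1 i j * a.1 i j := by field_simp
    _ ≤ (∑ p : Fin n × Fin n, a'.1 p.1 p.2 / a.1 p.1 p.2) * a.1 i j :=
        mul_le_mul_of_nonneg_right hle hpos.le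

lemma quad_sub {n : ℕ} (l : ℝ) (b c : Sn n) (x : Fin n → ℝ) :
    x ⬝ᵥ (l • b - c).1 *ᵥ x = l * (x ⬝ᵥ b.1 *ᵥ x) - x ⬝ᵥ c.1 *ᵥ x := by
  simp [Matrix.sub_mulVec, Matrix.smul_mulVec, dotProduct_sub,
    dotProduct_smul, smul_eq_mul]

lemma ker_subset {n : ℕ} (φ : Sn n →ₗ[ℝ] Sn n) (hφ : φ '' Cn n = Cn n) (t : Fin n)
    (b c : Sn n) (hb : b ∈ φ '' At n t) (hc : c ∈ φ '' At n t) :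
    {x : Fin n → ℝ | (∀ i, 0 ≤ x i) ∧ x ⬝ᵥ b.1 *ᵥ x = 0} ⊆
      {x : Fin n → ℝ | (∀ i, 0 ≤ x i) ∧ x ⬝ᵥ c.1 *ᵥ x = 0} := by
  obtain ⟨a, ha, rfl⟩ := hb
  obtain ⟨a', ha', rfl⟩ := hc
  obtain ⟨l, hl⟩ := At_dominates ha ha'
  have hmem : (l • a - a') ∈ Cn n := copos_of_nonneg hl
  have h1 : l • φ a - φ a' ∈ Cn n := by
    rw [← hφ]
    exact ⟨l • a - a', hmem, by simp⟩
  have h2 : φ a' ∈ Cn n := by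
    rw [← hφ]
    exact ⟨a', copos_of_nonneg (At_nonneg ha'), rfl⟩
  rintro x ⟨hx, hbx⟩
  refine ⟨hx, le_antisymm ?_ (h2 x hx)⟩
  have := h1 x hx
  rw [quad_sub, hbx, mul_zero, zero_sub, neg_nonneg] at this
  exact this
/-- Kernels of quadratic forms on the nonnegative orthant coincide for all b, c ∈ φ(A^t). -/
theorem stmt_9 (n : ℕ) (φ : Sn n →ₗ[ℝ] Sn n) (hφ : φ '' Cn n = Cn n) (t : Fin n)
    (b c : Sn n) (hb : b ∈ φ '' At n t) (hc : c ∈ φ '' At n t) :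
    {x : Fin n → ℝ | (∀ i, 0 ≤ x i) ∧ x ⬝ᵥ b.1 *ᵥ x = 0} =
      {x : Fin n → ℝ | (∀ i, 0 ≤ x i) ∧ x ⬝ᵥ c.1 *ᵥ x = 0} := by
  exact Set.Subset.antisymm (ker_subset φ hφ t b c hb hc) (ker_subset φ hφ t c b hc hb)
end

section
/- Let φ : S_n → S_n be linear with φ(C_n) = C_n and fix t. Then there is a nonnegative vector uᵗ with exactly one nonzero coordinate such that for every b ∈ φ(A^t), the kernel {x ≥ 0 : xᵀbx = 0} equals the ray {λuᵗ : λ ≥ 0}. -/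
open Matrix

/-!
Since the nonnegative symmetric matrices span `S_n`, `φ` is a linear automorphism with
`φ z ∈ C_n ↔ z ∈ C_n`. Every `a ∈ A^t` lies in the relative interior of the face
`F_t = {c ∈ C_n : c_tt = 0}`, so all `b ∈ φ(A^t)` have the same zero set, namely the common
zeros of `φ(F_t)`. It contains a nonzero vector: otherwise `φ a` would be strictly copositive,
hence interior to `C_n`, whereas `a - ε E_tt ∉ C_n` for every `ε > 0`.
At a zero `x` of a copositive `b`, `(b x)_i = 0` wherever `x_i > 0`. So for a common zero `x`
the functional `c ↦ (φ(c) x)_i` vanishes on `F_t`, which spans `{c_tt = 0}`; it is therefore a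
multiple of `c_tt`. Evaluating at the preimages of `E_ii` and `E_jj` shows that the supports of
all common zeros are one and the same singleton `{s}`, and the common zeros form the ray of `e_s`.
-/

open Filter Topology

section Copositive

variable {m : Type*} [Fintype m]

def nonnegZeros (b : Matrix m m ℝ) : Set (m → ℝ) :=
  {x | (∀ i, 0 ≤ x i) ∧ x ⬝ᵥ b *ᵥ x = 0}

lemma smul_mem_nonnegZeros {b : Matrix m m ℝ} {x : m → ℝ} (hx : x ∈ nonnegZeros b) {r : ℝ}
    (hr : 0 ≤ r) : r • x ∈ nonnegZeros b :=
  ⟨fun i => mul_nonneg hr (hx.1 i), by simp [mulVec_smul, hx.2]⟩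

lemma copositive_of_nonneg {a : Matrix m m ℝ} (h : ∀ i j, 0 ≤ a i j) : Copositive a :=
  fun _ hu => Finset.sum_nonneg fun i _ =>
    mul_nonneg (hu i) (Finset.sum_nonneg fun j _ => mul_nonneg (h i j) (hu j))

lemma copositive_of_nonneg_on_stdSimplex {b : Matrix m m ℝ}
    (h : ∀ x ∈ stdSimplex ℝ m, 0 ≤ x ⬝ᵥ b *ᵥ x) : Copositive b := by
  intro y hy
  have hr : 0 ≤ ∑ i, y i := Finset.sum_nonneg fun i _ => hy i
  rcases hr.eq_or_lt with hr | hr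
  · have : y = 0 := funext fun i =>
      (Finset.sum_eq_zero_iff_of_nonneg fun i _ => hy i).1 hr.symm i (Finset.mem_univ _)
    simp [this]
  · have hx : (∑ i, y i)⁻¹ • y ∈ stdSimplex ℝ m :=
      ⟨fun i => mul_nonneg (inv_nonneg.2 hr.le) (hy i), by
        simp [← Finset.mul_sum, hr.ne']⟩
    have hq := h _ hx
    simp only [mulVec_smul, dotProduct_smul, smul_dotProduct, smul_eq_mul] at hq
    exact (mul_nonneg_iff_of_pos_left (inv_pos.2 hr)).1
      ((mul_nonneg_iff_of_pos_left (inv_pos.2 hr)).1 hq)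

lemma Copositive.mulVec_apply_eq_zero [DecidableEq m] {b : Matrix m m ℝ} (hb : Copositive b)
    (hs : b.IsSymm) {x : m → ℝ} (hx : x ∈ nonnegZeros b) {i : m} (hi : 0 < x i) :
    (b *ᵥ x) i = 0 := by
  set f : ℝ → ℝ := fun τ => (x + τ • Pi.single i 1) ⬝ᵥ b *ᵥ (x + τ • Pi.single i 1)
  have hf : f = fun τ => 2 * (b *ᵥ x) i * τ + b i i * τ ^ 2 := by
    funext τ
    have hxb : x ⬝ᵥ b *ᵥ Pi.single i 1 = (b *ᵥ x) i := by
      rw [dotProduct_mulVec, dotProduct_single, ← mulVec_transpose, hs.eq, mul_one]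
    simp only [f, mulVec_add, mulVec_smul, dotProduct_add, add_dotProduct, dotProduct_smul,
      smul_dotProduct, hxb, hx.2, single_dotProduct, smul_eq_mul]
    simp only [one_mul, zero_add, mulVec_single, MulOpposite.op_one, Pi.smul_apply, col_apply,
      one_smul]
    ring
  have hmin : IsLocalMin f 0 := by
    filter_upwards [Ioo_mem_nhds (neg_lt_zero.2 hi) hi] with τ hτ
    refine (by simpa [f] using hx.2.le : f 0 ≤ 0).trans (hb _ fun k => ?_)
    rcases eq_or_ne k i with rfl | hk
    · simpa using (neg_lt_iff_pos_add'.1 hτ.1).le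
    · simp [hk, hx.1 k]
  have hd : HasDerivAt f (2 * (b *ᵥ x) i) 0 := by
    rw [hf]
    simpa using ((hasDerivAt_id' (0:ℝ)).const_mul (2 * (b *ᵥ x) i)).fun_add
      (((hasDerivAt_id' (0:ℝ)).fun_pow 2).const_mul (b i i))
  linarith [hmin.hasDerivAt_eq_zero hd]

lemma exists_copositive_sub_smul [Nonempty m] {b : Matrix m m ℝ}
    (hb : ∀ x : m → ℝ, (∀ i, 0 ≤ x i) → x ≠ 0 → 0 < x ⬝ᵥ b *ᵥ x) (c : Matrix m m ℝ) :
    ∃ ε : ℝ, 0 < ε ∧ Copositive (b - ε • c) := by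
  classical
  have hne : (stdSimplex ℝ m).Nonempty :=
    ⟨_, single_mem_stdSimplex ℝ (Classical.arbitrary m)⟩
  obtain ⟨x₀, hx₀, hmin⟩ := (isCompact_stdSimplex ℝ m).exists_isMinOn hne
    (show Continuous fun x : m → ℝ => x ⬝ᵥ b *ᵥ x by fun_prop).continuousOn
  obtain ⟨x₁, -, hmax⟩ := (isCompact_stdSimplex ℝ m).exists_isMaxOn hne
    (show Continuous fun x : m → ℝ => x ⬝ᵥ c *ᵥ x by fun_prop).continuousOn
  set δ := x₀ ⬝ᵥ b *ᵥ x₀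
  set K := x₁ ⬝ᵥ c *ᵥ x₁
  have hδ : 0 < δ := hb x₀ hx₀.1 fun h => by simpa [h] using hx₀.2
  refine ⟨δ / (|K| + 1), by positivity, copositive_of_nonneg_on_stdSimplex fun x hx => ?_⟩
  have hb : δ ≤ x ⬝ᵥ b *ᵥ x := hmin hx
  have hc : x ⬝ᵥ c *ᵥ x ≤ |K| := (hmax hx).trans (le_abs_self K)
  have hε : δ / (|K| + 1) * |K| ≤ δ := by
    rw [div_mul_eq_mul_div, div_le_iff₀ (by positivity)]
    nlinarith
  rw [sub_mulVec, dotProduct_sub, smul_mulVec, dotProduct_smul, smul_eq_mul]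
  nlinarith [mul_le_mul_of_nonneg_left hc (by positivity : (0:ℝ) ≤ δ / (|K| + 1))]

lemma eventually_nonneg_sub_smul {a c : Matrix m m ℝ} (ha : ∀ i j, 0 ≤ a i j)
    (hc : ∀ i j, a i j = 0 → c i j = 0) : ∀ᶠ ε in 𝓝 (0 : ℝ), ∀ i j, 0 ≤ (a - ε • c) i j := by
  refine eventually_all.2 fun i => eventually_all.2 fun j => ?_
  rcases (ha i j).eq_or_lt with h | h
  · simp [← h, hc i j h.symm]
  · have : Tendsto (fun ε : ℝ => a i j - ε * c i j) (𝓝 0) (𝓝 (a i j)) :=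
      (continuous_const.sub (continuous_id.mul continuous_const)).tendsto' _ _ (by simp)
    exact (this.eventually (lt_mem_nhds h)).mono fun ε hε => by simpa using hε.le

end Copositive

namespace Sn

variable {n : ℕ}

def single (t : Fin n) : Sn n :=
  ⟨Matrix.single t t 1, transpose_single t t 1⟩

def posPart (z : Sn n) : Sn n :=
  ⟨z.1.map (max · 0), z.2.map _⟩

@[simp]
lemma coe_single (t : Fin n) : (single t).1 = Matrix.single t t 1 := rfl

lemma posPart_sub_posPart_neg (z : Sn n) : posPart z - posPart (-z) = z := by
  ext i j
  simp [posPart, max_zero_sub_max_neg_zero_eq_self]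

lemma posPart_mem_Cn (z : Sn n) : posPart z ∈ Cn n :=
  copositive_of_nonneg fun _ _ => le_max_right _ _

end Sn

def Ft (n : ℕ) (t : Fin n) : Set (Sn n) := {c | c ∈ Cn n ∧ c.1 t t = 0}

lemma zero_mem_Ft {n : ℕ} (t : Fin n) : 0 ∈ Ft n t :=
  ⟨copositive_of_nonneg fun _ _ => le_rfl, rfl⟩

lemma LinearMap.apply_eq_smul_of_forall_Ft {n : ℕ} {t : Fin n} {M : Type*} [AddCommGroup M]
    [Module ℝ M] (ℓ : Sn n →ₗ[ℝ] M) (h : ∀ c ∈ Ft n t, ℓ c = 0) (c : Sn n) :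
    ℓ c = c.1 t t • ℓ (Sn.single t) := by
  set d := c - c.1 t t • Sn.single t
  have hd : d.1 t t = 0 := by simp [d]
  have hmem : ∀ e : Sn n, e.1 t t = 0 → Sn.posPart e ∈ Ft n t :=
    fun e he => ⟨Sn.posPart_mem_Cn e, by simp [Sn.posPart, he]⟩
  calc ℓ c = ℓ (Sn.posPart d - Sn.posPart (-d)) + c.1 t t • ℓ (Sn.single t) := by
        rw [Sn.posPart_sub_posPart_neg, ← map_smul, ← map_add, sub_add_cancel]
    _ = c.1 t t • ℓ (Sn.single t) := by
        rw [map_sub, h _ (hmem d hd), h _ (hmem (-d) (by simp [hd])), sub_zero, zero_add]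

lemma surjective_of_Cn_subset_image {n : ℕ} {φ : Sn n →ₗ[ℝ] Sn n} (hφ : Cn n ⊆ φ '' Cn n) :
    Function.Surjective φ := by
  intro z
  have hmem : ∀ w ∈ Cn n, w ∈ LinearMap.range φ := fun w hw =>
    let ⟨v, _, hv⟩ := hφ hw; ⟨v, hv⟩
  rw [← Sn.posPart_sub_posPart_neg z]
  exact Submodule.sub_mem _ (hmem _ (Sn.posPart_mem_Cn _)) (hmem _ (Sn.posPart_mem_Cn _))

lemma map_mem_Cn_iff {n : ℕ} {φ : Sn n →ₗ[ℝ] Sn n} (hφ : φ '' Cn n = Cn n) {z : Sn n} :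
    φ z ∈ Cn n ↔ z ∈ Cn n := by
  have hinj := LinearMap.injective_iff_surjective.2 (surjective_of_Cn_subset_image hφ.ge)
  conv_lhs => rw [← hφ]
  exact hinj.mem_set_image

lemma eq_smul_single_of_forall_ne_zero {ι : Type*} [DecidableEq ι] {y : ι → ℝ} {s : ι}
    (h : ∀ i, y i ≠ 0 → i = s) : y = y s • Pi.single s 1 := by
  funext i
  rcases eq_or_ne i s with rfl | hi
  · simp
  · simp [Pi.single_eq_of_ne hi, not_imp_comm.1 (h i) hi]

def commonZeros {n : ℕ} (φ : Sn n →ₗ[ℝ] Sn n) (t : Fin n) : Set (Fin n → ℝ) :=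
  ⋂ c ∈ Ft n t, nonnegZeros (φ c).1

section Preserver

variable {n : ℕ} {φ : Sn n →ₗ[ℝ] Sn n} {t : Fin n}

lemma smul_mem_commonZeros {x : Fin n → ℝ} (hx : x ∈ commonZeros φ t) {r : ℝ} (hr : 0 ≤ r) :
    r • x ∈ commonZeros φ t :=
  Set.mem_iInter₂.2 fun c hc => smul_mem_nonnegZeros (Set.mem_iInter₂.1 hx c hc) hr

lemma nonneg_of_mem_commonZeros {x : Fin n → ℝ} (hx : x ∈ commonZeros φ t) (i : Fin n) :
    0 ≤ x i :=
  (Set.mem_iInter₂.1 hx 0 (zero_mem_Ft t)).1 i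

lemma eq_of_mem_At_of_apply_eq_zero {a : Sn n} (ha : a ∈ At n t) {i j : Fin n}
    (h : a.1 i j = 0) : (i, j) = (t, t) :=
  by_contra fun hij => (ha.2 i j hij).ne' h

lemma nonneg_of_mem_At {a : Sn n} (ha : a ∈ At n t) (i j : Fin n) : 0 ≤ a.1 i j := by
  by_cases hij : (i, j) = (t, t)
  · obtain ⟨rfl, rfl⟩ := Prod.mk.inj hij
    exact ha.1.ge
  · exact (ha.2 i j hij).le

lemma mem_Ft_of_mem_At {a : Sn n} (ha : a ∈ At n t) : a ∈ Ft n t :=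
  ⟨copositive_of_nonneg (nonneg_of_mem_At ha), ha.1⟩

lemma At_nonempty (t : Fin n) : (At n t).Nonempty := by
  refine ⟨⟨of fun i j => if (i, j) = (t, t) then 0 else 1, ?_⟩, by simp, fun i j h => ?_⟩
  · ext i j
    simp [Prod.ext_iff, and_comm]
  · show (0 : ℝ) < if (i, j) = (t, t) then 0 else 1
    rw [if_neg h]
    exact one_pos

lemma nonnegZeros_eq_commonZeros (hφ : φ '' Cn n ⊆ Cn n) {a : Sn n} (ha : a ∈ At n t) :
    nonnegZeros (φ a).1 = commonZeros φ t := by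
  refine Set.Subset.antisymm (fun x hx => Set.mem_iInter₂.2 fun c hc => ?_)
    fun x hx => Set.mem_iInter₂.1 hx a (mem_Ft_of_mem_At ha)
  have hC : ∀ z ∈ Cn n, φ z ∈ Cn n := fun z hz => hφ ⟨z, hz, rfl⟩
  have hsmall := eventually_nonneg_sub_smul (c := c.1) (nonneg_of_mem_At ha) fun i j h => by
    obtain ⟨rfl, rfl⟩ := Prod.mk.inj (eq_of_mem_At_of_apply_eq_zero ha h)
    exact hc.2
  obtain ⟨ε, hεc, hε⟩ :=
    ((hsmall.filter_mono nhdsWithin_le_nhds).and (self_mem_nhdsWithin (s := Set.Ioi 0))).exists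
  have h₁ : 0 ≤ x ⬝ᵥ (φ (a - ε • c)).1 *ᵥ x :=
    hC _ (copositive_of_nonneg (by simpa using hεc)) x hx.1
  have h₂ : 0 ≤ x ⬝ᵥ (φ c).1 *ᵥ x := hC c hc.1 x hx.1
  simp only [map_sub, map_smul, Submodule.coe_sub, Submodule.coe_smul, sub_mulVec, smul_mulVec,
    dotProduct_sub, dotProduct_smul, hx.2, smul_eq_mul, zero_sub] at h₁
  exact ⟨hx.1, le_antisymm (by nlinarith) h₂⟩

lemma exists_ne_zero_mem_nonnegZeros (hφ : φ '' Cn n = Cn n) {a : Sn n} (ha : a ∈ Ft n t) :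
    ∃ x ∈ nonnegZeros (φ a).1, x ≠ 0 := by
  by_contra! h
  have hstrict : ∀ x : Fin n → ℝ, (∀ i, 0 ≤ x i) → x ≠ 0 → 0 < x ⬝ᵥ (φ a).1 *ᵥ x :=
    fun x hx hx0 => lt_of_le_of_ne ((map_mem_Cn_iff hφ).2 ha.1 x hx) fun h0 =>
      hx0 (h x ⟨hx, h0.symm⟩)
  have : Nonempty (Fin n) := ⟨t⟩
  obtain ⟨ε, hε, hcop⟩ := exists_copositive_sub_smul hstrict (φ (Sn.single t)).1
  have hmem : a - ε • Sn.single t ∈ Cn n := (map_mem_Cn_iff hφ).1 (by simpa [Cn] using hcop)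
  have hq := hmem (Pi.single t 1) fun i => by by_cases hi : i = t <;> simp [hi]
  simp [ha.2] at hq
  linarith

lemma exists_ne_zero_mem_commonZeros (hφ : φ '' Cn n = Cn n) (t : Fin n) :
    ∃ x ∈ commonZeros φ t, x ≠ 0 := by
  obtain ⟨a, ha⟩ := At_nonempty t
  rw [← nonnegZeros_eq_commonZeros hφ.le ha]
  exact exists_ne_zero_mem_nonnegZeros hφ (mem_Ft_of_mem_At ha)

lemma eq_of_forall_Ft_mulVec_apply_eq_zero (hφ : Function.Surjective φ) {v w : Fin n → ℝ}
    {i j : Fin n} (hv : ∀ c ∈ Ft n t, ((φ c).1 *ᵥ v) i = 0)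
    (hw : ∀ c ∈ Ft n t, ((φ c).1 *ᵥ w) j = 0) (hvi : v i ≠ 0) (hwj : w j ≠ 0) : i = j := by
  have factor : ∀ {u : Fin n → ℝ} {k : Fin n}, (∀ c ∈ Ft n t, ((φ c).1 *ᵥ u) k = 0) →
      ∀ c, ((φ c).1 *ᵥ u) k = c.1 t t * ((φ (Sn.single t)).1 *ᵥ u) k := fun {u k} h c =>
    (LinearMap.proj k ∘ₗ LinearMap.applyₗ u ∘ₗ (Matrix.toLin' : _ ≃ₗ[ℝ] _).toLinearMap ∘ₗ
      (Sn n).subtype ∘ₗ φ).apply_eq_smul_of_forall_Ft (by simpa using h) c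
  by_contra hij
  obtain ⟨cᵢ, hcᵢ⟩ := hφ (Sn.single i)
  obtain ⟨cⱼ, hcⱼ⟩ := hφ (Sn.single j)
  have e₁ := factor hv cᵢ
  have e₂ := factor hw cᵢ
  have e₃ := factor hw cⱼ
  simp [hcᵢ, hcⱼ, single_mulVec, Ne.symm hij] at e₁ e₂ e₃
  have hcᵢt : cᵢ.1 t t ≠ 0 := by
    rintro h
    rw [h, zero_mul] at e₁
    exact hvi e₁
  rw [e₂.resolve_left hcᵢt, mul_zero] at e₃
  exact hwj e₃

lemma eq_of_mem_commonZeros (hφ : φ '' Cn n = Cn n) {x y : Fin n → ℝ}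
    (hx : x ∈ commonZeros φ t) (hy : y ∈ commonZeros φ t) {i j : Fin n} (hxi : x i ≠ 0)
    (hyj : y j ≠ 0) : i = j := by
  have stationary : ∀ {z}, z ∈ commonZeros φ t → ∀ {k}, z k ≠ 0 →
      ∀ c ∈ Ft n t, ((φ c).1 *ᵥ z) k = 0 := fun hz k hk c hc =>
    have hzc := Set.mem_iInter₂.1 hz c hc
    Copositive.mulVec_apply_eq_zero ((map_mem_Cn_iff hφ).2 hc.1) (φ c).2 hzc
      (lt_of_le_of_ne (hzc.1 k) (Ne.symm hk))
  exact eq_of_forall_Ft_mulVec_apply_eq_zero (surjective_of_Cn_subset_image hφ.ge)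
    (stationary hx hxi) (stationary hy hyj) hxi hyj

lemma exists_commonZeros_eq_ray (hφ : φ '' Cn n = Cn n) (t : Fin n) :
    ∃ s, commonZeros φ t = {x | ∃ r : ℝ, 0 ≤ r ∧ x = r • Pi.single s 1} := by
  obtain ⟨x, hx, hx0⟩ := exists_ne_zero_mem_commonZeros hφ t
  obtain ⟨s, hs⟩ : ∃ s, x s ≠ 0 := Function.ne_iff.1 hx0
  have hray : ∀ y ∈ commonZeros φ t, y = y s • Pi.single s 1 := fun y hy =>
    eq_smul_single_of_forall_ne_zero fun i hi => eq_of_mem_commonZeros hφ hy hx hi hs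
  refine ⟨s, Set.Subset.antisymm
    (fun y hy => ⟨y s, nonneg_of_mem_commonZeros hy s, hray y hy⟩) ?_⟩
  rintro _ ⟨r, hr, rfl⟩
  have hxs : 0 < x s := lt_of_le_of_ne (nonneg_of_mem_commonZeros hx s) (Ne.symm hs)
  have hsingle : r • Pi.single s (1 : ℝ) = (r / x s) • x := by
    calc r • Pi.single s (1 : ℝ) = (r / x s) • (x s • Pi.single s 1) := by
          rw [smul_smul, div_mul_cancel₀ _ hs]
      _ = (r / x s) • x := by rw [← hray x hx]
  exact hsingle ▸ smul_mem_commonZeros hx (div_nonneg hr hxs.le)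

end Preserver

/-- There is a nonnegative vector uᵗ with exactly one nonzero coordinate whose ray is the
common kernel of all b ∈ φ(A^t). -/
theorem stmt_11 (n : ℕ) (φ : Sn n →ₗ[ℝ] Sn n) (hφ : φ '' Cn n = Cn n) (t : Fin n) :
    ∃ u : Fin n → ℝ, (∀ i, 0 ≤ u i) ∧ (∃! i, u i ≠ 0) ∧
      ∀ b ∈ φ '' At n t,
        {x : Fin n → ℝ | (∀ i, 0 ≤ x i) ∧ x ⬝ᵥ b.1 *ᵥ x = 0} =
          {x : Fin n → ℝ | ∃ lam : ℝ, 0 ≤ lam ∧ x = lam • u} := by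
  obtain ⟨s, hs⟩ := exists_commonZeros_eq_ray hφ t
  refine ⟨Pi.single s 1, fun i => by by_cases h : i = s <;> simp [h],
    ⟨s, by simp, fun i hi => by_contra fun h => hi (Pi.single_eq_of_ne h 1)⟩, ?_⟩
  rintro _ ⟨a, ha, rfl⟩
  exact (nonnegZeros_eq_commonZeros hφ.le ha).trans hs
end

section
/- If a copositive matrix b and a nonzero nonnegative vector u satisfy uᵀbu = 0, and σ is the support of u, then the principal submatrix b(σ|σ) annihilates the restriction of u to σ: b(σ|σ)u' = 0, where u' is u with its zero coordinates removed. -/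
open Matrix

/-- If b is copositive, u ≥ 0 nonzero with uᵀbu = 0, and σ is the support of u, then
the principal submatrix b(σ|σ) annihilates the restriction of u to σ. -/
theorem stmt_12 (n : ℕ) (b : Matrix (Fin n) (Fin n) ℝ) (hs : b.IsSymm) (hb : Copositive b)
    (u : Fin n → ℝ) (hu : ∀ i, 0 ≤ u i) (hu0 : u ≠ 0) (h : u ⬝ᵥ b *ᵥ u = 0) :
    (b.submatrix (Subtype.val : {i // u i ≠ 0} → Fin n) Subtype.val) *ᵥ
      (fun i : {i // u i ≠ 0} => u i.1) = 0 := by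
  have key : ∀ i : Fin n, u i ≠ 0 → (b *ᵥ u) i = 0 := by
    intro i hi
    have hpos : 0 < u i := (hu i).lt_of_ne (Ne.symm hi)
    set d := (b *ᵥ u) i with hd
    set c := b i i with hc
    have e1 : Pi.single i (1:ℝ) ⬝ᵥ (b *ᵥ u) = d := by
      rw [single_dotProduct]; ring
    have e2 : u ⬝ᵥ (b *ᵥ Pi.single i (1:ℝ)) = d := by
      rw [dotProduct_mulVec, ← mulVec_transpose, hs, dotProduct_single]
      ring
    have e3 : Pi.single i (1:ℝ) ⬝ᵥ (b *ᵥ Pi.single i (1:ℝ)) = c := by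
      rw [single_dotProduct, Matrix.mulVec_single]
      simp [hc]
    have hquad : ∀ ε : ℝ, |ε| ≤ u i → 0 ≤ c * ε ^ 2 + 2 * d * ε := by
      intro ε hε
      have h1 : ∀ j, 0 ≤ (u + ε • (Pi.single i 1 : Fin n → ℝ)) j := by
        intro j
        rcases eq_or_ne j i with rfl | hj
        · have := neg_abs_le ε
          simp only [Pi.add_apply, Pi.smul_apply, Pi.single_eq_same, smul_eq_mul, mul_one]
          linarith
        · simp [Pi.single_eq_of_ne hj, hu j]
      have h2 := hb _ h1
      have expand : (u + ε • (Pi.single i 1 : Fin n → ℝ)) ⬝ᵥ b *ᵥ (u + ε • (Pi.single i 1 : Fin n → ℝ))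
          = (u ⬝ᵥ b *ᵥ u) + (c * ε ^ 2 + 2 * d * ε) := by
        simp only [mulVec_add, mulVec_smul, add_dotProduct, dotProduct_add,
          smul_dotProduct, dotProduct_smul, smul_eq_mul, e1, e2, e3]
        ring
      rw [expand, h] at h2
      linarith
    by_contra hd0
    rcases lt_or_gt_of_ne hd0 with hneg | hpos'
    · -- d < 0
      set ε := min (u i) (-d / (|c| + 1)) with hε
      have hε0 : 0 < ε := lt_min hpos (div_pos (by linarith) (by positivity))
      have h2 : ε * (|c| + 1) ≤ -d := by
        rw [← le_div_iff₀ (by positivity : (0:ℝ) < |c| + 1)]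
        exact min_le_right _ _
      have h4 := hquad ε (by rw [abs_of_pos hε0]; exact min_le_left _ _)
      nlinarith [mul_le_mul_of_nonneg_right (le_abs_self c) hε0.le, hε0, h2, h4]
    · set ε := min (u i) (d / (|c| + 1)) with hε
      have hε0 : 0 < ε := lt_min hpos (div_pos (by linarith) (by positivity))
      have h2 : ε * (|c| + 1) ≤ d := by
        rw [← le_div_iff₀ (by positivity : (0:ℝ) < |c| + 1)]
        exact min_le_right _ _
      have h4 := hquad (-ε) (by rw [abs_neg, abs_of_pos hε0]; exact min_le_left _ _)
      nlinarith [mul_le_mul_of_nonneg_right (le_abs_self c) hε0.le, hε0, h2, h4]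
  funext i
  have h0 := key i.1 i.2
  simp only [mulVec, dotProduct, submatrix_apply, Pi.zero_apply] at h0 ⊢
  rw [← Finset.sum_subtype (Finset.univ.filter (fun j => u j ≠ 0))
    (by simp : ∀ x, x ∈ Finset.univ.filter (fun j => u j ≠ 0) ↔ u x ≠ 0)
    (fun j => b i.1 j * u j)]
  rw [Finset.sum_subset (Finset.subset_univ _) (fun x _ hx => by
    simp only [Finset.mem_filter, Finset.mem_univ, true_and, not_not] at hx
    simp [hx])]
  exact h0
end

section
/- A trace-zero symmetric matrix is copositive if and only if it is entrywise nonnegative with zero diagonal. -/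
open Matrix

/-- A trace-zero symmetric matrix is copositive iff it is entrywise nonnegative
with zero diagonal. -/
theorem stmt_14 (n : ℕ) (a : Matrix (Fin n) (Fin n) ℝ) (hs : a.IsSymm)
    (htr : a.trace = 0) :
    Copositive a ↔ ((∀ i j, 0 ≤ a i j) ∧ ∀ i, a i i = 0) := by
  constructor
  · intro hc
    -- diagonal entries are nonneg
    have hdiag : ∀ i, 0 ≤ a i i := by
      intro i
      have := hc (Pi.single i 1) (fun j => by
        by_cases h : j = i <;> simp [Pi.single_apply, h])
      simpa [dotProduct, mulVec, Pi.single_apply, Finset.sum_ite_eq',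
        Finset.mul_sum] using this
    have hzero : ∀ i, a i i = 0 := by
      have hsum : ∑ i, a i i = 0 := htr
      intro i
      refine le_antisymm ?_ (hdiag i)
      by_contra h
      push_neg at h
      have hlt : (0:ℝ) < a i i := lt_of_le_of_ne (hdiag i) (Ne.symm (ne_of_gt h))
      have : (0:ℝ) < ∑ j, a j j :=
        Finset.sum_pos' (fun j _ => hdiag j) ⟨i, Finset.mem_univ i, hlt⟩
      linarith
    refine ⟨?_, hzero⟩
    intro i j
    by_cases hij : i = j
    · subst hij; exact hdiag i
    · -- use u = e_i + e_j
      set u : Fin n → ℝ := fun k => (if k = i then 1 else 0) + (if k = j then 1 else 0)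
      have hu : ∀ k, 0 ≤ u k := by
        intro k; unfold u; positivity
      have h := hc u hu
      have hform : u ⬝ᵥ a *ᵥ u = a i i + a i j + a j i + a j j := by
        simp only [dotProduct, mulVec, u, mul_add, add_mul, mul_ite, ite_mul,
          mul_one, mul_zero, one_mul, zero_mul, Finset.sum_add_distrib,
          Finset.sum_ite_eq', Finset.mem_univ, if_true, Finset.mul_sum]
        ring
      rw [hform, hzero i, hzero j] at h
      have hsym : a j i = a i j := by
        have := congrFun (congrFun hs i) j
        simpa [Matrix.transpose_apply] using this
      rw [hsym] at h
      linarith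
  · rintro ⟨hnn, _⟩ u hu
    simp only [dotProduct, mulVec]
    apply Finset.sum_nonneg
    intro i _
    apply mul_nonneg (hu i)
    apply Finset.sum_nonneg
    intro j _
    exact mul_nonneg (hnn i j) (hu j)
end
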